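/- arXiv:2311.06257 — 11 statements merged into one kernel-verified Lean document; each statement's English description precedes it below -/
import Mathlib

section
/- Let V be a real normed vector space, E ⊆ V a nonempty open convex set, and let φ : E → ℝ and ψ_u : E → ℝ (u = 1,…,t) be convex at p̄ and directionally differentiable at p̄, where p̄ ∈ F = {p ∈ E : ψ_u(p) ≤ 0 for all u}. Suppose there exist scalars μ_u ≥ 0 (u = 1,…,t) such that φ'(p̄; p − p̄) + Σ_{u=1}^t μ_u ψ_u'(p̄; p − p̄) ≥ 0 for all p ∈ E, and μ_u ψ_u(p̄) = 0 for all u. Then p̄ is an optimal solution of the problem of minimizing φ over F, i.e. φ(p̄) ≤ φ(p) for every p ∈ F. -/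
/-- One-sided directional derivative of `f` at `p` in direction `w`, with value `d`. -/
def HasDirDeriv {V : Type*} [NormedAddCommGroup V] [NormedSpace ℝ V]
    (f : V → ℝ) (p w : V) (d : ℝ) : Prop :=
  Filter.Tendsto (fun α : ℝ => (f (p + α • w) - f p) / α)
    (nhdsWithin 0 (Set.Ioi 0)) (nhds d)

/-- `f` is convex at the point `p` (relative to the convex set `E`). -/
def ConvexAtPt {V : Type*} [NormedAddCommGroup V] [NormedSpace ℝ V]
    (E : Set V) (f : V → ℝ) (p : V) : Prop :=
  ∀ q ∈ E, ∀ α : ℝ, 0 ≤ α → α ≤ 1 →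
    f ((1 - α) • p + α • q) ≤ (1 - α) * f p + α * f q

/-! Convexity at `pbar` bounds each directional derivative `f'(pbar; p - pbar)` by
`f p - f pbar`. Hence the KKT inequality gives `0 ≤ φ p - φ pbar + ∑ μ u (ψ u p - ψ u pbar)`,
and the sum is `∑ μ u ψ u p ≤ 0` by complementary slackness and feasibility of `p`. -/

open Filter Finset

namespace ConvexAtPt

variable {V : Type*} [NormedAddCommGroup V] [NormedSpace ℝ V] {E : Set V} {f : V → ℝ} {x y : V}

theorem apply_add_smul_sub_le (hc : ConvexAtPt E f x) (hy : y ∈ E) {α : ℝ} (hα₀ : 0 ≤ α)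
    (hα₁ : α ≤ 1) : f (x + α • (y - x)) ≤ f x + α * (f y - f x) := by
  have hseg : x + α • (y - x) = (1 - α) • x + α • y := by
    rw [smul_sub, sub_smul, one_smul]; abel
  rw [hseg]
  linarith [hc y hy α hα₀ hα₁]

/-- The difference quotients converging to `d` are all bounded by their value at `α = 1`. -/
theorem hasDirDeriv_le (hc : ConvexAtPt E f x) (hy : y ∈ E) {d : ℝ}
    (hd : HasDirDeriv f x (y - x) d) : d ≤ f y - f x := by
  refine le_of_tendsto hd ?_
  filter_upwards [nhdsWithin_le_nhds (Iio_mem_nhds one_pos), self_mem_nhdsWithin]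
    with α (hα₁ : α < 1) (hα₀ : 0 < α)
  rw [div_le_iff₀ hα₀]
  linarith [hc.apply_add_smul_sub_le hy hα₀.le hα₁.le]

end ConvexAtPt

theorem kkt_sufficiency_rvop_general
    {V : Type*} [NormedAddCommGroup V] [NormedSpace ℝ V]
    (E : Set V)
    (t : ℕ) (φ : V → ℝ) (ψ : Fin t → V → ℝ)
    (pbar : V)
    (φ' : V → ℝ) (hφd : ∀ w, HasDirDeriv φ pbar w (φ' w))
    (ψ' : Fin t → V → ℝ) (hψd : ∀ u w, HasDirDeriv (ψ u) pbar w (ψ' u w))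
    (hφc : ConvexAtPt E φ pbar) (hψc : ∀ u, ConvexAtPt E (ψ u) pbar)
    (μ : Fin t → ℝ) (hμ : ∀ u, 0 ≤ μ u)
    (hkkt : ∀ p ∈ E, 0 ≤ φ' (p - pbar) + ∑ u, μ u * ψ' u (p - pbar))
    (hcs : ∀ u, μ u * ψ u pbar = 0) :
    ∀ p ∈ E, (∀ u, ψ u p ≤ 0) → φ pbar ≤ φ p := by
  intro p hp hψp
  have hφ : φ' (p - pbar) ≤ φ p - φ pbar := hφc.hasDirDeriv_le hp (hφd _)
  have hψ : ∑ u, μ u * ψ' u (p - pbar) ≤ ∑ u, μ u * (ψ u p - ψ u pbar) :=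
    sum_le_sum fun u _ =>
      mul_le_mul_of_nonneg_left ((hψc u).hasDirDeriv_le hp (hψd u _)) (hμ u)
  have hslack : ∑ u, μ u * (ψ u p - ψ u pbar) ≤ 0 :=
    sum_nonpos fun u _ => by
      rw [mul_sub, hcs u, sub_zero]
      exact mul_nonpos_of_nonneg_of_nonpos (hμ u) (hψp u)
  linarith [hkkt p hp]

/-- Theorem 3.1, Euclidean case: KKT sufficiency for the
real-valued problem (RVOP). -/
theorem kkt_sufficiency_rvop
    {V : Type*} [NormedAddCommGroup V] [NormedSpace ℝ V]
    (E : Set V) (hEne : E.Nonempty) (hEopen : IsOpen E) (hEconv : Convex ℝ E)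
    (t : ℕ) (φ : V → ℝ) (ψ : Fin t → V → ℝ)
    (pbar : V) (hpbarE : pbar ∈ E) (hpbarF : ∀ u, ψ u pbar ≤ 0)
    (φ' : V → ℝ) (hφd : ∀ w, HasDirDeriv φ pbar w (φ' w))
    (ψ' : Fin t → V → ℝ) (hψd : ∀ u w, HasDirDeriv (ψ u) pbar w (ψ' u w))
    (hφc : ConvexAtPt E φ pbar) (hψc : ∀ u, ConvexAtPt E (ψ u) pbar)
    (μ : Fin t → ℝ) (hμ : ∀ u, 0 ≤ μ u)
    (hkkt : ∀ p ∈ E, 0 ≤ φ' (p - pbar) + ∑ u, μ u * ψ' u (p - pbar))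
    (hcs : ∀ u, μ u * ψ u pbar = 0) :
    ∀ p ∈ E, (∀ u, ψ u p ≤ 0) → φ pbar ≤ φ p :=
  kkt_sufficiency_rvop_general E t φ ψ pbar φ' hφd ψ' hψd hφc hψc μ hμ hkkt hcs
end

section
/- (Theorem 3.2(a), Euclidean case.) Let p̄ ∈ F and suppose ψ_u : E → ℝ (u = 1,…,t) are convex at p̄ and directionally differentiable at p̄. Suppose the interval-valued objectives φ_s (s = 1,…,l) are LU-convex at p̄ and weakly directionally differentiable at p̄, and that there exist scalars λ_s^L > 0, λ_s^U > 0 (s = 1,…,l) and μ_u ≥ 0 (u = 1,…,t) such that: (i) for all p ∈ E, Σ_{s=1}^l λ_s^L (φ_s^L)'(p̄; p − p̄) + Σ_{s=1}^l λ_s^U (φ_s^U)'(p̄; p − p̄) + Σ_{u=1}^t μ_u ψ_u'(p̄; p − p̄) ≥ 0; and (ii) μ_u ψ_u(p̄) = 0 for all u. Then p̄ is a type-I Pareto optimal solution of (MIVOP2). -/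
/-- `f` (with directional-derivative function `f'` at `pbar`) is pseudo-convex at `pbar`. -/
def PseudoConvexAt {V : Type*} [NormedAddCommGroup V] [NormedSpace ℝ V]
    (E : Set V) (f : V → ℝ) (f' : V → ℝ) (pbar : V) : Prop :=
  ∀ p ∈ E, f p < f pbar → f' (p - pbar) < 0

/-- `f` (with directional-derivative function `f'` at `pbar`) is strictly
pseudo-convex at `pbar`. -/
def StrictPseudoConvexAt {V : Type*} [NormedAddCommGroup V] [NormedSpace ℝ V]
    (E : Set V) (f : V → ℝ) (f' : V → ℝ) (pbar : V) : Prop :=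
  ∀ p ∈ E, p ≠ pbar → f p ≤ f pbar → f' (p - pbar) < 0

/-- `[aL, aU] ≤_LU [bL, bU]`. -/
def LUle (aL aU bL bU : ℝ) : Prop := aL ≤ bL ∧ aU ≤ bU

/-- `[aL, aU] <_LU [bL, bU]`. -/
def LUlt (aL aU bL bU : ℝ) : Prop := LUle aL aU bL bU ∧ (aL ≠ bL ∨ aU ≠ bU)

/-- `[aL, aU] ≤_CW [bL, bU]`. -/
def CWle (aL aU bL bU : ℝ) : Prop :=
  (aL + aU) / 2 ≤ (bL + bU) / 2 ∧ (aU - aL) / 2 ≤ (bU - bL) / 2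

/-- `[aL, aU] <_CW [bL, bU]`. -/
def CWlt (aL aU bL bU : ℝ) : Prop := CWle aL aU bL bU ∧ (aL ≠ bL ∨ aU ≠ bU)


lemma dirDeriv_le_sub {V : Type*} [NormedAddCommGroup V] [NormedSpace ℝ V]
    {E : Set V} {f : V → ℝ} {pbar p : V} {d : ℝ}
    (hconv : ConvexAtPt E f pbar) (hp : p ∈ E)
    (hd : HasDirDeriv f pbar (p - pbar) d) : d ≤ f p - f pbar := by
  refine le_of_tendsto hd ?_
  filter_upwards [Ioo_mem_nhdsGT_of_mem (by norm_num : (0:ℝ) ∈ Set.Ico 0 1)]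
    with α hα
  have hα0 : 0 < α := hα.1
  have hkey := hconv p hp α hα0.le hα.2.le
  have heq : (1 - α) • pbar + α • p = pbar + α • (p - pbar) := by
    rw [smul_sub, sub_smul, one_smul]; abel
  rw [heq] at hkey
  rw [div_le_iff₀ hα0]
  nlinarith [hkey]

/-- Theorem 3.2(a), Euclidean case: LU-convex KKT sufficiency for
type-I Pareto optimal solutions of (MIVOP2). -/
theorem kkt_type_I_LU_convex
    {V : Type*} [NormedAddCommGroup V] [NormedSpace ℝ V]
    (E : Set V) (hEne : E.Nonempty) (hEopen : IsOpen E) (hEconv : Convex ℝ E)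
    (l t : ℕ) (φL φU : Fin l → V → ℝ) (ψ : Fin t → V → ℝ)
    (hφint : ∀ s, ∀ x ∈ E, φL s x ≤ φU s x)
    (pbar : V) (hpbarE : pbar ∈ E) (hpbarF : ∀ u, ψ u pbar ≤ 0)
    (φL' φU' : Fin l → V → ℝ)
    (hφLd : ∀ s w, HasDirDeriv (φL s) pbar w (φL' s w))
    (hφUd : ∀ s w, HasDirDeriv (φU s) pbar w (φU' s w))
    (ψ' : Fin t → V → ℝ)
    (hψd : ∀ u w, HasDirDeriv (ψ u) pbar w (ψ' u w))
    (hφLc : ∀ s, ConvexAtPt E (φL s) pbar)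
    (hφUc : ∀ s, ConvexAtPt E (φU s) pbar)
    (hψc : ∀ u, ConvexAtPt E (ψ u) pbar)
    (lamL lamU : Fin l → ℝ) (μ : Fin t → ℝ)
    (hlamL : ∀ s, 0 < lamL s) (hlamU : ∀ s, 0 < lamU s) (hμ : ∀ u, 0 ≤ μ u)
    (hkkt : ∀ p ∈ E,
      0 ≤ ∑ s, lamL s * φL' s (p - pbar) + ∑ s, lamU s * φU' s (p - pbar)
          + ∑ u, μ u * ψ' u (p - pbar))
    (hcs : ∀ u, μ u * ψ u pbar = 0) :
    ¬ ∃ phat, (phat ∈ E ∧ ∀ u, ψ u phat ≤ 0) ∧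
      (∀ s, LUle (φL s phat) (φU s phat) (φL s pbar) (φU s pbar)) ∧
      (∃ h, LUlt (φL h phat) (φU h phat) (φL h pbar) (φU h pbar)) := by
  rintro ⟨phat, ⟨hphatE, hphatF⟩, hle, h, hlt⟩
  have hφL' : ∀ s, φL' s (phat - pbar) ≤ φL s phat - φL s pbar := fun s =>
    dirDeriv_le_sub (hφLc s) hphatE (hφLd s _)
  have hφU' : ∀ s, φU' s (phat - pbar) ≤ φU s phat - φU s pbar := fun s =>
    dirDeriv_le_sub (hφUc s) hphatE (hφUd s _)
  have hψ' : ∀ u, ψ' u (phat - pbar) ≤ ψ u phat - ψ u pbar := fun u =>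
    dirDeriv_le_sub (hψc u) hphatE (hψd u _)
  have hμψ : ∑ u, μ u * ψ' u (phat - pbar) ≤ 0 := by
    apply Finset.sum_nonpos
    intro u _
    have h1 : μ u * ψ' u (phat - pbar) ≤ μ u * (ψ u phat - ψ u pbar) :=
      mul_le_mul_of_nonneg_left (hψ' u) (hμ u)
    have h2 : μ u * (ψ u phat - ψ u pbar) = μ u * ψ u phat - μ u * ψ u pbar := by ring
    have h3 : μ u * ψ u phat ≤ 0 := mul_nonpos_of_nonneg_of_nonpos (hμ u) (hphatF u)
    rw [h2, hcs u] at h1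
    linarith
  have hmain := hkkt phat hphatE
  have hφsum : 0 ≤ ∑ s, lamL s * φL' s (phat - pbar) + ∑ s, lamU s * φU' s (phat - pbar) := by
    linarith
  have hup : ∑ s, lamL s * φL' s (phat - pbar) + ∑ s, lamU s * φU' s (phat - pbar)
      ≤ ∑ s, (lamL s * (φL s phat - φL s pbar) + lamU s * (φU s phat - φU s pbar)) := by
    rw [Finset.sum_add_distrib]
    exact add_le_add
      (Finset.sum_le_sum fun s _ => mul_le_mul_of_nonneg_left (hφL' s) (hlamL s).le)
      (Finset.sum_le_sum fun s _ => mul_le_mul_of_nonneg_left (hφU' s) (hlamU s).le)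
  have hneg : ∑ s, (lamL s * (φL s phat - φL s pbar) + lamU s * (φU s phat - φU s pbar)) < 0 := by
    have := Finset.sum_lt_sum
      (f := fun s => lamL s * (φL s phat - φL s pbar) + lamU s * (φU s phat - φU s pbar))
      (g := fun _ => (0:ℝ))
      (s := Finset.univ)
      (fun s _ =>
        add_nonpos
          (mul_nonpos_of_nonneg_of_nonpos (hlamL s).le (by linarith [(hle s).1]))
          (mul_nonpos_of_nonneg_of_nonpos (hlamU s).le (by linarith [(hle s).2])))
      ⟨h, Finset.mem_univ h, by
        obtain ⟨⟨hL, hU⟩, hne⟩ := hlt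
        rcases hne with hne | hne
        · have hlt1 : φL h phat < φL h pbar := lt_of_le_of_ne hL hne
          have := mul_neg_of_pos_of_neg (hlamL h) (by linarith : φL h phat - φL h pbar < 0)
          have := mul_nonpos_of_nonneg_of_nonpos (hlamU h).le (by linarith : φU h phat - φU h pbar ≤ 0)
          linarith
        · have hlt1 : φU h phat < φU h pbar := lt_of_le_of_ne hU hne
          have := mul_neg_of_pos_of_neg (hlamU h) (by linarith : φU h phat - φU h pbar < 0)
          have := mul_nonpos_of_nonneg_of_nonpos (hlamL h).le (by linarith : φL h phat - φL h pbar ≤ 0)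
          linarith⟩
    simpa using this
  linarith
end

section
/- (Theorem 3.2(b), Euclidean case.) Let p̄ ∈ F and suppose ψ_u : E → ℝ (u = 1,…,t) are convex at p̄ and directionally differentiable at p̄. Suppose the interval-valued objectives φ_s (s = 1,…,l) are CW-convex at p̄ and weakly directionally differentiable at p̄, and that there exist scalars λ_s^C > 0, λ_s^W > 0 (s = 1,…,l) and μ_u ≥ 0 (u = 1,…,t) such that: (i) for all p ∈ E, Σ_{s=1}^l λ_s^C (φ_s^C)'(p̄; p − p̄) + Σ_{s=1}^l λ_s^W (φ_s^W)'(p̄; p − p̄) + Σ_{u=1}^t μ_u ψ_u'(p̄; p − p̄) ≥ 0; and (ii) μ_u ψ_u(p̄) = 0 for all u. Then p̄ is a type-II Pareto optimal solution of (MIVOP2). -/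
/-!
Suppose some feasible `p̂` CW-dominated `p̄`. Convexity at `p̄` bounds each one-sided directional
derivative in the direction `p̂ - p̄` by the corresponding increment `f p̂ - f p̄`. The increments
of the centers and half-widths are nonpositive and one of them is negative, so with positive
multipliers the objective part of the KKT sum is negative; by complementary slackness the
constraint part is at most `∑ μ u * ψ u p̂ ≤ 0`. This contradicts the KKT inequality at `p̂`.
-/

open Finset

section DirDeriv

variable {V : Type*} [NormedAddCommGroup V] [NormedSpace ℝ V] {f g : V → ℝ} {p w : V} {a b : ℝ}

lemma HasDirDeriv.add (hf : HasDirDeriv f p w a) (hg : HasDirDeriv g p w b) :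
    HasDirDeriv (fun x => f x + g x) p w (a + b) :=
  (Filter.Tendsto.add hf hg).congr fun α => by ring

lemma HasDirDeriv.sub (hf : HasDirDeriv f p w a) (hg : HasDirDeriv g p w b) :
    HasDirDeriv (fun x => f x - g x) p w (a - b) :=
  (Filter.Tendsto.sub hf hg).congr fun α => by ring

lemma HasDirDeriv.div_const (hf : HasDirDeriv f p w a) (c : ℝ) :
    HasDirDeriv (fun x => f x / c) p w (a / c) :=
  (Filter.Tendsto.div_const hf c).congr fun α => by ring

lemma ConvexAtPt.hasDirDeriv_le_s5 {E : Set V} {q : V} (hf : ConvexAtPt E f p) (hq : q ∈ E)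
    (hd : HasDirDeriv f p (q - p) a) : a ≤ f q - f p := by
  refine le_of_tendsto hd ?_
  filter_upwards [Ioc_mem_nhdsGT (zero_lt_one' ℝ)] with α ⟨hα₀, hα₁⟩
  have hseg : p + α • (q - p) = (1 - α) • p + α • q := by
    rw [smul_sub, sub_smul, one_smul]; abel
  have hconv := hf q hq α hα₀.le hα₁
  rw [← hseg] at hconv
  rw [div_le_iff₀ hα₀]
  linarith

end DirDeriv

lemma CWlt.center_lt_or_width_lt {aL aU bL bU : ℝ} (h : CWlt aL aU bL bU) :
    (aL + aU) / 2 < (bL + bU) / 2 ∨ (aU - aL) / 2 < (bU - bL) / 2 := by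
  obtain ⟨⟨hC, hW⟩, hne⟩ := h
  by_contra! hge
  rcases hne with hne | hne <;> exact hne (by linarith [hge.1, hge.2])

lemma sum_mul_add_sum_mul_neg {ι : Type*} [Fintype ι] {c d x y : ι → ℝ}
    (hc : ∀ i, 0 < c i) (hd : ∀ i, 0 < d i) (hx : ∀ i, x i ≤ 0) (hy : ∀ i, y i ≤ 0)
    {j : ι} (hj : x j < 0 ∨ y j < 0) :
    ∑ i, c i * x i + ∑ i, d i * y i < 0 := by
  rw [← sum_add_distrib]
  have hle : ∀ i, c i * x i + d i * y i ≤ 0 := fun i =>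
    add_nonpos (mul_nonpos_of_nonneg_of_nonpos (hc i).le (hx i))
      (mul_nonpos_of_nonneg_of_nonpos (hd i).le (hy i))
  refine sum_neg' (fun i _ => hle i) ⟨j, mem_univ j, ?_⟩
  rcases hj with hj | hj
  · linarith [mul_neg_of_pos_of_neg (hc j) hj, mul_nonpos_of_nonneg_of_nonpos (hd j).le (hy j)]
  · linarith [mul_neg_of_pos_of_neg (hd j) hj, mul_nonpos_of_nonneg_of_nonpos (hc j).le (hx j)]

theorem kkt_type_II_CW_convex_general
    {V : Type*} [NormedAddCommGroup V] [NormedSpace ℝ V]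
    (E : Set V)
    (l t : ℕ) (φL φU : Fin l → V → ℝ) (ψ : Fin t → V → ℝ)
    (pbar : V)
    (φL' φU' : Fin l → V → ℝ)
    (hφLd : ∀ s w, HasDirDeriv (φL s) pbar w (φL' s w))
    (hφUd : ∀ s w, HasDirDeriv (φU s) pbar w (φU' s w))
    (ψ' : Fin t → V → ℝ)
    (hψd : ∀ u w, HasDirDeriv (ψ u) pbar w (ψ' u w))
    -- CW-convexity of the objectives at `pbar`
    (hφCc : ∀ s, ConvexAtPt E (fun x => (φL s x + φU s x) / 2) pbar)
    (hφWc : ∀ s, ConvexAtPt E (fun x => (φU s x - φL s x) / 2) pbar)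
    (hψc : ∀ u, ConvexAtPt E (ψ u) pbar)
    (lamC lamW : Fin l → ℝ) (μ : Fin t → ℝ)
    (hlamC : ∀ s, 0 < lamC s) (hlamW : ∀ s, 0 < lamW s) (hμ : ∀ u, 0 ≤ μ u)
    (hkkt : ∀ p ∈ E,
      0 ≤ ∑ s, lamC s * ((φL' s (p - pbar) + φU' s (p - pbar)) / 2)
          + ∑ s, lamW s * ((φU' s (p - pbar) - φL' s (p - pbar)) / 2)
          + ∑ u, μ u * ψ' u (p - pbar))
    (hcs : ∀ u, μ u * ψ u pbar = 0) :
    ¬ ∃ phat, (phat ∈ E ∧ ∀ u, ψ u phat ≤ 0) ∧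
      (∀ s, CWle (φL s phat) (φU s phat) (φL s pbar) (φU s pbar)) ∧
      (∃ h, CWlt (φL h phat) (φU h phat) (φL h pbar) (φU h pbar)) := by
  rintro ⟨phat, ⟨hpE, hpF⟩, hle, h, hlt⟩
  set w := phat - pbar
  have hCenter : ∑ s, lamC s * ((φL' s w + φU' s w) / 2) ≤
      ∑ s, lamC s * ((φL s phat + φU s phat) / 2 - (φL s pbar + φU s pbar) / 2) := by
    gcongr with s
    · exact (hlamC s).le
    · exact (hφCc s).hasDirDeriv_le_s5 hpE (((hφLd s w).add (hφUd s w)).div_const 2)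
  have hWidth : ∑ s, lamW s * ((φU' s w - φL' s w) / 2) ≤
      ∑ s, lamW s * ((φU s phat - φL s phat) / 2 - (φU s pbar - φL s pbar) / 2) := by
    gcongr with s
    · exact (hlamW s).le
    · exact (hφWc s).hasDirDeriv_le_s5 hpE (((hφUd s w).sub (hφLd s w)).div_const 2)
  have hConstr : ∑ u, μ u * ψ' u w ≤ 0 := by
    refine sum_nonpos fun u _ => ?_
    calc μ u * ψ' u w ≤ μ u * (ψ u phat - ψ u pbar) :=
          mul_le_mul_of_nonneg_left ((hψc u).hasDirDeriv_le_s5 hpE (hψd u w)) (hμ u)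
      _ = μ u * ψ u phat := by rw [mul_sub, hcs u, sub_zero]
      _ ≤ 0 := mul_nonpos_of_nonneg_of_nonpos (hμ u) (hpF u)
  have hObjective := sum_mul_add_sum_mul_neg hlamC hlamW
    (fun s => sub_nonpos.2 (hle s).1) (fun s => sub_nonpos.2 (hle s).2)
    (hlt.center_lt_or_width_lt.imp sub_neg.2 sub_neg.2)
  linarith [hkkt phat hpE]

/-- Theorem 3.2(b), Euclidean case: CW-convex KKT sufficiency for
type-II Pareto optimal solutions of (MIVOP2). -/
theorem kkt_type_II_CW_convex
    {V : Type*} [NormedAddCommGroup V] [NormedSpace ℝ V]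
    (E : Set V) (hEne : E.Nonempty) (hEopen : IsOpen E) (hEconv : Convex ℝ E)
    (l t : ℕ) (φL φU : Fin l → V → ℝ) (ψ : Fin t → V → ℝ)
    (hφint : ∀ s, ∀ x ∈ E, φL s x ≤ φU s x)
    (pbar : V) (hpbarE : pbar ∈ E) (hpbarF : ∀ u, ψ u pbar ≤ 0)
    (φL' φU' : Fin l → V → ℝ)
    (hφLd : ∀ s w, HasDirDeriv (φL s) pbar w (φL' s w))
    (hφUd : ∀ s w, HasDirDeriv (φU s) pbar w (φU' s w))
    (ψ' : Fin t → V → ℝ)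
    (hψd : ∀ u w, HasDirDeriv (ψ u) pbar w (ψ' u w))
    -- CW-convexity of the objectives at `pbar`
    (hφCc : ∀ s, ConvexAtPt E (fun x => (φL s x + φU s x) / 2) pbar)
    (hφWc : ∀ s, ConvexAtPt E (fun x => (φU s x - φL s x) / 2) pbar)
    (hψc : ∀ u, ConvexAtPt E (ψ u) pbar)
    (lamC lamW : Fin l → ℝ) (μ : Fin t → ℝ)
    (hlamC : ∀ s, 0 < lamC s) (hlamW : ∀ s, 0 < lamW s) (hμ : ∀ u, 0 ≤ μ u)
    (hkkt : ∀ p ∈ E,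
      0 ≤ ∑ s, lamC s * ((φL' s (p - pbar) + φU' s (p - pbar)) / 2)
          + ∑ s, lamW s * ((φU' s (p - pbar) - φL' s (p - pbar)) / 2)
          + ∑ u, μ u * ψ' u (p - pbar))
    (hcs : ∀ u, μ u * ψ u pbar = 0) :
    ¬ ∃ phat, (phat ∈ E ∧ ∀ u, ψ u phat ≤ 0) ∧
      (∀ s, CWle (φL s phat) (φU s phat) (φL s pbar) (φU s pbar)) ∧
      (∃ h, CWlt (φL h phat) (φU h phat) (φL h pbar) (φU h pbar)) :=
  kkt_type_II_CW_convex_general E l t φL φU ψ pbar φL' φU' hφLd hφUd ψ' hψd hφCc hφWc hψc lamC lamW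
    μ hlamC hlamW hμ hkkt hcs
end

section
/- (Theorem 3.3, Euclidean case.) Let ψ_u : E → ℝ (u = 1,…,t) be convex on the nonempty open convex set E ⊆ V and directionally differentiable at p̄ ∈ F, and let the interval-valued objectives φ_s (s = 1,…,l) be LU-convex at p̄ and weakly directionally differentiable at p̄. Assume t ≥ 2l and let {Q_1, …, Q_{2l}} be a decomposition of {1,…,t} into 2l nonempty pairwise disjoint subsets whose union is {1,…,t}. Suppose there exist scalars μ_u ≥ 0 (u = 1,…,t) such that for every p ∈ E and every s = 1,…,l: (i) (φ_s^L)'(p̄; p − p̄) + Σ_{u ∈ Q_s} μ_u ψ_u'(p̄; p − p̄) ≥ 0; (ii) (φ_s^U)'(p̄; p − p̄) + Σ_{u ∈ Q_{s+l}} μ_u ψ_u'(p̄; p − p̄) ≥ 0; and (iii) μ_u ψ_u(p̄) = 0 for all u. Then p̄ is a type-I Pareto optimal solution of (MIVOP2). -/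
section

variable {V : Type*} [NormedAddCommGroup V] [NormedSpace ℝ V]

theorem ConvexOn.convexAtPt {E : Set V} {f : V → ℝ} (hf : ConvexOn ℝ E f) {p : V}
    (hp : p ∈ E) : ConvexAtPt E f p :=
  fun _ hq α hα₀ hα₁ => hf.2 hp hq (by linarith) hα₀ (by ring)

theorem ConvexAtPt.le_sub_of_hasDirDeriv {E : Set V} {f : V → ℝ} {p q : V} {d : ℝ}
    (hf : ConvexAtPt E f p) (hq : q ∈ E) (hd : HasDirDeriv f p (q - p) d) :
    d ≤ f q - f p := by
  refine le_of_tendsto hd ?_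
  filter_upwards [Ioo_mem_nhdsGT (zero_lt_one' ℝ)] with α ⟨hα₀, hα₁⟩
  have hseg : p + α • (q - p) = (1 - α) • p + α • q := by
    rw [smul_sub, sub_smul, one_smul]; abel
  rw [hseg, div_le_iff₀ hα₀]
  linarith [hf q hq α hα₀.le hα₁.le]

theorem ConvexAtPt.le_of_hasDirDeriv_add_nonneg {E : Set V} {f : V → ℝ} {p q : V} {d c : ℝ}
    (hf : ConvexAtPt E f p) (hq : q ∈ E) (hd : HasDirDeriv f p (q - p) d)
    (hdc : 0 ≤ d + c) (hc : c ≤ 0) : f p ≤ f q := by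
  linarith [hf.le_sub_of_hasDirDeriv hq hd]

theorem ConvexAtPt.mul_hasDirDeriv_nonpos {E : Set V} {g : V → ℝ} {p q : V} {d μ : ℝ}
    (hg : ConvexAtPt E g p) (hq : q ∈ E) (hd : HasDirDeriv g p (q - p) d)
    (hμ : 0 ≤ μ) (hgq : g q ≤ 0) (hslack : μ * g p = 0) : μ * d ≤ 0 :=
  calc μ * d ≤ μ * (g q - g p) := mul_le_mul_of_nonneg_left (hg.le_sub_of_hasDirDeriv hq hd) hμ
    _ = μ * g q := by rw [mul_sub, hslack, sub_zero]
    _ ≤ 0 := mul_nonpos_of_nonneg_of_nonpos hμ hgq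

end

theorem LUlt.not_of_le {aL aU bL bU : ℝ} (h : LUlt aL aU bL bU) (hL : bL ≤ aL) (hU : bU ≤ aU) :
    False := by
  obtain ⟨⟨haL, haU⟩, hne | hne⟩ := h
  · exact hne (le_antisymm haL hL)
  · exact hne (le_antisymm haU hU)

theorem kkt_type_I_decomposition_general
    {V : Type*} [NormedAddCommGroup V] [NormedSpace ℝ V]
    (E : Set V)
    (l t : ℕ) (φL φU : Fin l → V → ℝ) (ψ : Fin t → V → ℝ)
    (pbar : V) (hpbarE : pbar ∈ E)
    (φL' φU' : Fin l → V → ℝ)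
    (hφLd : ∀ s w, HasDirDeriv (φL s) pbar w (φL' s w))
    (hφUd : ∀ s w, HasDirDeriv (φU s) pbar w (φU' s w))
    (ψ' : Fin t → V → ℝ)
    (hψd : ∀ u w, HasDirDeriv (ψ u) pbar w (ψ' u w))
    (hφLc : ∀ s, ConvexAtPt E (φL s) pbar)
    (hφUc : ∀ s, ConvexAtPt E (φU s) pbar)
    (hψc : ∀ u, ConvexOn ℝ E (ψ u))
    (Q : Fin (l + l) → Finset (Fin t))
    (μ : Fin t → ℝ) (hμ : ∀ u, 0 ≤ μ u)
    (hkktL : ∀ p ∈ E, ∀ s : Fin l,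
      0 ≤ φL' s (p - pbar) +
          ∑ u ∈ Q (Fin.castAdd l s), μ u * ψ' u (p - pbar))
    (hkktU : ∀ p ∈ E, ∀ s : Fin l,
      0 ≤ φU' s (p - pbar) +
          ∑ u ∈ Q (Fin.natAdd l s), μ u * ψ' u (p - pbar))
    (hcs : ∀ u, μ u * ψ u pbar = 0) :
    ¬ ∃ phat, (phat ∈ E ∧ ∀ u, ψ u phat ≤ 0) ∧
      (∀ s, LUle (φL s phat) (φU s phat) (φL s pbar) (φU s pbar)) ∧
      (∃ h, LUlt (φL h phat) (φU h phat) (φL h pbar) (φU h pbar)) := by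
  rintro ⟨phat, ⟨hphatE, hphatF⟩, -, s, hlt⟩
  have hsum_nonpos (S : Finset (Fin t)) : ∑ u ∈ S, μ u * ψ' u (phat - pbar) ≤ 0 :=
    Finset.sum_nonpos fun u _ =>
      ((hψc u).convexAtPt hpbarE).mul_hasDirDeriv_nonpos hphatE (hψd u _) (hμ u) (hphatF u) (hcs u)
  exact hlt.not_of_le
    ((hφLc s).le_of_hasDirDeriv_add_nonneg hphatE (hφLd s _) (hkktL phat hphatE s) (hsum_nonpos _))
    ((hφUc s).le_of_hasDirDeriv_add_nonneg hphatE (hφUd s _) (hkktU phat hphatE s) (hsum_nonpos _))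

/-- Theorem 3.3, Euclidean case: KKT sufficiency for type-I Pareto
optimal solutions using a decomposition `{Q_1, …, Q_{2l}}` of the constraint
index set. For `s : Fin l`, `Q_s` is `Q (Fin.castAdd l s)` and `Q_{s+l}` is
`Q (Fin.natAdd l s)`. -/
theorem kkt_type_I_decomposition
    {V : Type*} [NormedAddCommGroup V] [NormedSpace ℝ V]
    (E : Set V) (hEne : E.Nonempty) (hEopen : IsOpen E) (hEconv : Convex ℝ E)
    (l t : ℕ) (φL φU : Fin l → V → ℝ) (ψ : Fin t → V → ℝ)
    (hφint : ∀ s, ∀ x ∈ E, φL s x ≤ φU s x)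
    (pbar : V) (hpbarE : pbar ∈ E) (hpbarF : ∀ u, ψ u pbar ≤ 0)
    (φL' φU' : Fin l → V → ℝ)
    (hφLd : ∀ s w, HasDirDeriv (φL s) pbar w (φL' s w))
    (hφUd : ∀ s w, HasDirDeriv (φU s) pbar w (φU' s w))
    (ψ' : Fin t → V → ℝ)
    (hψd : ∀ u w, HasDirDeriv (ψ u) pbar w (ψ' u w))
    (hφLc : ∀ s, ConvexAtPt E (φL s) pbar)
    (hφUc : ∀ s, ConvexAtPt E (φU s) pbar)
    (hψc : ∀ u, ConvexOn ℝ E (ψ u))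
    -- the decomposition `Q_{t,2l}`
    (h2l : 2 * l ≤ t)
    (Q : Fin (l + l) → Finset (Fin t))
    (hQne : ∀ i, (Q i).Nonempty)
    (hQdisj : ∀ i j, i ≠ j → Disjoint (Q i) (Q j))
    (hQunion : Finset.univ.biUnion Q = Finset.univ)
    (μ : Fin t → ℝ) (hμ : ∀ u, 0 ≤ μ u)
    (hkktL : ∀ p ∈ E, ∀ s : Fin l,
      0 ≤ φL' s (p - pbar) +
          ∑ u ∈ Q (Fin.castAdd l s), μ u * ψ' u (p - pbar))
    (hkktU : ∀ p ∈ E, ∀ s : Fin l,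
      0 ≤ φU' s (p - pbar) +
          ∑ u ∈ Q (Fin.natAdd l s), μ u * ψ' u (p - pbar))
    (hcs : ∀ u, μ u * ψ u pbar = 0) :
    ¬ ∃ phat, (phat ∈ E ∧ ∀ u, ψ u phat ≤ 0) ∧
      (∀ s, LUle (φL s phat) (φU s phat) (φL s pbar) (φU s pbar)) ∧
      (∃ h, LUlt (φL h phat) (φU h phat) (φL h pbar) (φU h pbar)) :=
  kkt_type_I_decomposition_general E l t φL φU ψ pbar hpbarE φL' φU' hφLd hφUd ψ' hψd hφLc hφUc hψc
    Q μ hμ hkktL hkktU hcs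
end

section
/- (Theorem 3.4(a), Euclidean case.) Let p̄ ∈ F, let each ψ_u (u = 1,…,t) be directionally differentiable at p̄, and assume ψ_u is strictly pseudo-convex at p̄ for every active index u ∈ J(p̄). Let the interval-valued objectives φ_s (s = 1,…,l), defined on the nonempty open convex set E, be weakly directionally differentiable at p̄ and LU-strictly pseudo-convex at p̄. Suppose that for every feasible point p ∈ F there exist scalars λ_s^L > 0, λ_s^U > 0 (s = 1,…,l) and μ_u^L ≥ 0, μ_u^U ≥ 0 (u = 1,…,t), possibly depending on p, such that: (i) Σ_{s=1}^l λ_s^L (φ_s^L)'(p̄; p − p̄) + Σ_{u=1}^t μ_u^L ψ_u'(p̄; p − p̄) ≥ 0; (ii) Σ_{s=1}^l λ_s^U (φ_s^U)'(p̄; p − p̄) + Σ_{u=1}^t μ_u^U ψ_u'(p̄; p − p̄) ≥ 0; and (iii) μ_u^L ψ_u(p̄) = 0 = μ_u^U ψ_u(p̄) for all u. Then p̄ is a type-I Pareto optimal solution of (MIVOP2). -/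
section StrictPseudoConvex

variable {V : Type*} [NormedAddCommGroup V] [NormedSpace ℝ V] {E : Set V} {pbar p : V}

theorem sum_mul_neg_of_strictPseudoConvexAt {ι : Type*} [Fintype ι] [Nonempty ι] {f f' : ι → V → ℝ}
    {lam : ι → ℝ} (hlam : ∀ i, 0 < lam i)
    (hspc : ∀ i, StrictPseudoConvexAt E (f i) (f' i) pbar)
    (hp : p ∈ E) (hne : p ≠ pbar) (hle : ∀ i, f i p ≤ f i pbar) :
    ∑ i, lam i * f' i (p - pbar) < 0 :=
  Finset.sum_neg (fun i _ => mul_neg_of_pos_of_neg (hlam i) (hspc i p hp hne (hle i)))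
    Finset.univ_nonempty

theorem mul_nonpos_of_active_strictPseudoConvexAt {f f' : V → ℝ} {μ : ℝ}
    (hspc : f pbar = 0 → StrictPseudoConvexAt E f f' pbar)
    (hμ : 0 ≤ μ) (hslack : μ * f pbar = 0) (hp : p ∈ E) (hne : p ≠ pbar) (hfp : f p ≤ 0) :
    μ * f' (p - pbar) ≤ 0 := by
  rcases hμ.eq_or_lt with rfl | hμpos
  · simp
  have hactive : f pbar = 0 := (mul_eq_zero.mp hslack).resolve_left hμpos.ne'
  exact (mul_neg_of_pos_of_neg hμpos (hspc hactive p hp hne (hactive ▸ hfp))).le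

end StrictPseudoConvex

theorem kkt_type_I_LU_strict_pseudoconvex_general
    {V : Type*} [NormedAddCommGroup V] [NormedSpace ℝ V]
    (E : Set V)
    (l t : ℕ) (φL φU : Fin l → V → ℝ) (ψ : Fin t → V → ℝ)
    (pbar : V)
    (φL' φU' : Fin l → V → ℝ)
    (ψ' : Fin t → V → ℝ)
    -- strict pseudo-convexity of the active constraints at `pbar`
    (hψspc : ∀ u, ψ u pbar = 0 → StrictPseudoConvexAt E (ψ u) (ψ' u) pbar)
    -- LU-strict pseudo-convexity of the objectives at `pbar`
    (hφLspc : ∀ s, StrictPseudoConvexAt E (φL s) (φL' s) pbar)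
    -- multipliers, possibly depending on the feasible point `p`
    (hkkt : ∀ p, p ∈ E → (∀ u, ψ u p ≤ 0) →
      ∃ (lamL lamU : Fin l → ℝ) (μL μU : Fin t → ℝ),
        (∀ s, 0 < lamL s) ∧ (∀ s, 0 < lamU s) ∧
        (∀ u, 0 ≤ μL u) ∧ (∀ u, 0 ≤ μU u) ∧
        0 ≤ ∑ s, lamL s * φL' s (p - pbar) + ∑ u, μL u * ψ' u (p - pbar) ∧
        0 ≤ ∑ s, lamU s * φU' s (p - pbar) + ∑ u, μU u * ψ' u (p - pbar) ∧
        (∀ u, μL u * ψ u pbar = 0 ∧ μU u * ψ u pbar = 0)) :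
    ¬ ∃ phat, (phat ∈ E ∧ ∀ u, ψ u phat ≤ 0) ∧
      (∀ s, LUle (φL s phat) (φU s phat) (φL s pbar) (φU s pbar)) ∧
      (∃ h, LUlt (φL h phat) (φU h phat) (φL h pbar) (φU h pbar)) := by
  rintro ⟨phat, ⟨hpE, hpF⟩, hle, h, hlt⟩
  have hne : phat ≠ pbar := by
    rintro rfl
    exact hlt.2.elim (· rfl) (· rfl)
  have : Nonempty (Fin l) := ⟨h⟩
  obtain ⟨lamL, _, μL, _, hlamL, -, hμL, -, hKKT, -, hslack⟩ := hkkt phat hpE hpF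
  have hobjective : ∑ s, lamL s * φL' s (phat - pbar) < 0 :=
    sum_mul_neg_of_strictPseudoConvexAt hlamL hφLspc hpE hne fun s => (hle s).1
  have hconstraint : ∑ u, μL u * ψ' u (phat - pbar) ≤ 0 :=
    Finset.sum_nonpos fun u _ =>
      mul_nonpos_of_active_strictPseudoConvexAt (hψspc u) (hμL u) (hslack u).1 hpE hne (hpF u)
  linarith

/-- Theorem 3.4(a), Euclidean case: KKT sufficiency for type-I
Pareto optimal solutions under LU-strict pseudo-convexity of the objectives and
strict pseudo-convexity of the active constraints. -/
theorem kkt_type_I_LU_strict_pseudoconvex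
    {V : Type*} [NormedAddCommGroup V] [NormedSpace ℝ V]
    (E : Set V) (hEne : E.Nonempty) (hEopen : IsOpen E) (hEconv : Convex ℝ E)
    (l t : ℕ) (φL φU : Fin l → V → ℝ) (ψ : Fin t → V → ℝ)
    (hφint : ∀ s, ∀ x ∈ E, φL s x ≤ φU s x)
    (pbar : V) (hpbarE : pbar ∈ E) (hpbarF : ∀ u, ψ u pbar ≤ 0)
    (φL' φU' : Fin l → V → ℝ)
    (hφLd : ∀ s w, HasDirDeriv (φL s) pbar w (φL' s w))
    (hφUd : ∀ s w, HasDirDeriv (φU s) pbar w (φU' s w))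
    (ψ' : Fin t → V → ℝ)
    (hψd : ∀ u w, HasDirDeriv (ψ u) pbar w (ψ' u w))
    -- strict pseudo-convexity of the active constraints at `pbar`
    (hψspc : ∀ u, ψ u pbar = 0 → StrictPseudoConvexAt E (ψ u) (ψ' u) pbar)
    -- LU-strict pseudo-convexity of the objectives at `pbar`
    (hφLspc : ∀ s, StrictPseudoConvexAt E (φL s) (φL' s) pbar)
    (hφUspc : ∀ s, StrictPseudoConvexAt E (φU s) (φU' s) pbar)
    -- multipliers, possibly depending on the feasible point `p`
    (hkkt : ∀ p, p ∈ E → (∀ u, ψ u p ≤ 0) →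
      ∃ (lamL lamU : Fin l → ℝ) (μL μU : Fin t → ℝ),
        (∀ s, 0 < lamL s) ∧ (∀ s, 0 < lamU s) ∧
        (∀ u, 0 ≤ μL u) ∧ (∀ u, 0 ≤ μU u) ∧
        0 ≤ ∑ s, lamL s * φL' s (p - pbar) + ∑ u, μL u * ψ' u (p - pbar) ∧
        0 ≤ ∑ s, lamU s * φU' s (p - pbar) + ∑ u, μU u * ψ' u (p - pbar) ∧
        (∀ u, μL u * ψ u pbar = 0 ∧ μU u * ψ u pbar = 0)) :
    ¬ ∃ phat, (phat ∈ E ∧ ∀ u, ψ u phat ≤ 0) ∧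
      (∀ s, LUle (φL s phat) (φU s phat) (φL s pbar) (φU s pbar)) ∧
      (∃ h, LUlt (φL h phat) (φU h phat) (φL h pbar) (φU h pbar)) :=
  kkt_type_I_LU_strict_pseudoconvex_general E l t φL φU ψ pbar φL' φU' ψ' hψspc hφLspc hkkt
end

section
/- (Theorem 3.4(b), Euclidean case.) Let p̄ ∈ F, let each ψ_u (u = 1,…,t) be directionally differentiable at p̄, and assume ψ_u is strictly pseudo-convex at p̄ for every active index u ∈ J(p̄). Let the interval-valued objectives φ_s (s = 1,…,l), defined on the nonempty open convex set E, be weakly directionally differentiable at p̄ and CW-strictly pseudo-convex at p̄. Suppose that for every feasible point p ∈ F there exist scalars λ_s^C > 0, λ_s^W > 0 (s = 1,…,l) and μ_u^C ≥ 0, μ_u^W ≥ 0 (u = 1,…,t), possibly depending on p, such that: (iv) Σ_{s=1}^l λ_s^C (φ_s^C)'(p̄; p − p̄) + Σ_{u=1}^t μ_u^C ψ_u'(p̄; p − p̄) ≥ 0; (v) Σ_{s=1}^l λ_s^W (φ_s^W)'(p̄; p − p̄) + Σ_{u=1}^t μ_u^W ψ_u'(p̄; p − p̄) ≥ 0; and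 (vi) μ_u^C ψ_u(p̄) = 0 = μ_u^W ψ_u(p̄) for all u. Then p̄ is a type-II Pareto optimal solution of (MIVOP2). -/
/-!
Suppose some feasible `phat` CW-dominated `pbar`. Then `phat ≠ pbar`, and every centre
`φ_s^C(phat) ≤ φ_s^C(pbar)`, so strict pseudo-convexity makes every `(φ_s^C)'(pbar; phat - pbar)`
negative. A multiplier `μ_u^C > 0` forces `ψ_u` to be active, and then strict pseudo-convexity
together with `ψ_u(phat) ≤ 0 = ψ_u(pbar)` makes `ψ_u'(pbar; phat - pbar)` negative. Hence the
left-hand side of the centre KKT inequality (iv) is negative, a contradiction.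
-/

theorem CWlt_irrefl (a b : ℝ) : ¬ CWlt a b a b :=
  fun h => h.2.elim (· rfl) (· rfl)

section StrictPseudoConvex

variable {V : Type*} [NormedAddCommGroup V] [NormedSpace ℝ V] {E : Set V} {pbar p : V}

theorem StrictPseudoConvexAt.weighted_sum_neg {ι : Type*} [Fintype ι] [Nonempty ι]
    {f f' : ι → V → ℝ} {lam : ι → ℝ} (hlam : ∀ i, 0 < lam i)
    (hf : ∀ i, StrictPseudoConvexAt E (f i) (f' i) pbar) (hp : p ∈ E) (hne : p ≠ pbar)
    (hle : ∀ i, f i p ≤ f i pbar) :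
    ∑ i, lam i * f' i (p - pbar) < 0 :=
  Finset.sum_neg (fun i _ => mul_neg_of_pos_of_neg (hlam i) (hf i p hp hne (hle i)))
    Finset.univ_nonempty

theorem mul_nonpos_of_complementary_slackness {g g' : V → ℝ} {μ : ℝ} (hμ : 0 ≤ μ)
    (hcomp : μ * g pbar = 0) (hg : g pbar = 0 → StrictPseudoConvexAt E g g' pbar)
    (hp : p ∈ E) (hne : p ≠ pbar) (hgp : g p ≤ 0) :
    μ * g' (p - pbar) ≤ 0 := by
  rcases hμ.eq_or_lt with rfl | hμpos
  · simp
  have hactive : g pbar = 0 := (mul_eq_zero.mp hcomp).resolve_left hμpos.ne'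
  exact (mul_neg_of_pos_of_neg hμpos (hg hactive p hp hne (hactive ▸ hgp))).le

end StrictPseudoConvex

theorem kkt_type_II_CW_strict_pseudoconvex_general
    {V : Type*} [NormedAddCommGroup V] [NormedSpace ℝ V]
    (E : Set V)
    (l t : ℕ) (φL φU : Fin l → V → ℝ) (ψ : Fin t → V → ℝ)
    (pbar : V)
    (φL' φU' : Fin l → V → ℝ)
    (ψ' : Fin t → V → ℝ)
    -- strict pseudo-convexity of the active constraints at `pbar`
    (hψspc : ∀ u, ψ u pbar = 0 → StrictPseudoConvexAt E (ψ u) (ψ' u) pbar)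
    -- CW-strict pseudo-convexity of the objectives at `pbar`
    (hφCspc : ∀ s, StrictPseudoConvexAt E (fun x => (φL s x + φU s x) / 2)
      (fun w => (φL' s w + φU' s w) / 2) pbar)
    -- multipliers, possibly depending on the feasible point `p`
    (hkkt : ∀ p, p ∈ E → (∀ u, ψ u p ≤ 0) →
      ∃ (lamC lamW : Fin l → ℝ) (μC μW : Fin t → ℝ),
        (∀ s, 0 < lamC s) ∧ (∀ s, 0 < lamW s) ∧
        (∀ u, 0 ≤ μC u) ∧ (∀ u, 0 ≤ μW u) ∧
        0 ≤ ∑ s, lamC s * ((φL' s (p - pbar) + φU' s (p - pbar)) / 2)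
            + ∑ u, μC u * ψ' u (p - pbar) ∧
        0 ≤ ∑ s, lamW s * ((φU' s (p - pbar) - φL' s (p - pbar)) / 2)
            + ∑ u, μW u * ψ' u (p - pbar) ∧
        (∀ u, μC u * ψ u pbar = 0 ∧ μW u * ψ u pbar = 0)) :
    ¬ ∃ phat, (phat ∈ E ∧ ∀ u, ψ u phat ≤ 0) ∧
      (∀ s, CWle (φL s phat) (φU s phat) (φL s pbar) (φU s pbar)) ∧
      (∃ h, CWlt (φL h phat) (φU h phat) (φL h pbar) (φU h pbar)) := by
  rintro ⟨phat, ⟨hphatE, hphatF⟩, hle, h, hlt⟩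
  have hne : phat ≠ pbar := by
    rintro rfl
    exact CWlt_irrefl _ _ hlt
  have : Nonempty (Fin l) := ⟨h⟩
  obtain ⟨lamC, _, μC, _, hlamC, -, hμC, -, hcentre, -, hcomp⟩ := hkkt phat hphatE hphatF
  have hobj : ∑ s, lamC s * ((φL' s (phat - pbar) + φU' s (phat - pbar)) / 2) < 0 :=
    StrictPseudoConvexAt.weighted_sum_neg (f := fun s x => (φL s x + φU s x) / 2)
      (f' := fun s w => (φL' s w + φU' s w) / 2) hlamC hφCspc hphatE hne (fun s => (hle s).1)
  have hcons : ∑ u, μC u * ψ' u (phat - pbar) ≤ 0 :=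
    Finset.sum_nonpos fun u _ => mul_nonpos_of_complementary_slackness (hμC u) (hcomp u).1
      (hψspc u) hphatE hne (hphatF u)
  linarith

/-- Theorem 3.4(b), Euclidean case: KKT sufficiency for type-II
Pareto optimal solutions under CW-strict pseudo-convexity of the objectives and
strict pseudo-convexity of the active constraints. -/
theorem kkt_type_II_CW_strict_pseudoconvex
    {V : Type*} [NormedAddCommGroup V] [NormedSpace ℝ V]
    (E : Set V) (hEne : E.Nonempty) (hEopen : IsOpen E) (hEconv : Convex ℝ E)
    (l t : ℕ) (φL φU : Fin l → V → ℝ) (ψ : Fin t → V → ℝ)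
    (hφint : ∀ s, ∀ x ∈ E, φL s x ≤ φU s x)
    (pbar : V) (hpbarE : pbar ∈ E) (hpbarF : ∀ u, ψ u pbar ≤ 0)
    (φL' φU' : Fin l → V → ℝ)
    (hφLd : ∀ s w, HasDirDeriv (φL s) pbar w (φL' s w))
    (hφUd : ∀ s w, HasDirDeriv (φU s) pbar w (φU' s w))
    (ψ' : Fin t → V → ℝ)
    (hψd : ∀ u w, HasDirDeriv (ψ u) pbar w (ψ' u w))
    -- strict pseudo-convexity of the active constraints at `pbar`
    (hψspc : ∀ u, ψ u pbar = 0 → StrictPseudoConvexAt E (ψ u) (ψ' u) pbar)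
    -- CW-strict pseudo-convexity of the objectives at `pbar`
    (hφCspc : ∀ s, StrictPseudoConvexAt E (fun x => (φL s x + φU s x) / 2)
      (fun w => (φL' s w + φU' s w) / 2) pbar)
    (hφWspc : ∀ s, StrictPseudoConvexAt E (fun x => (φU s x - φL s x) / 2)
      (fun w => (φU' s w - φL' s w) / 2) pbar)
    -- multipliers, possibly depending on the feasible point `p`
    (hkkt : ∀ p, p ∈ E → (∀ u, ψ u p ≤ 0) →
      ∃ (lamC lamW : Fin l → ℝ) (μC μW : Fin t → ℝ),
        (∀ s, 0 < lamC s) ∧ (∀ s, 0 < lamW s) ∧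
        (∀ u, 0 ≤ μC u) ∧ (∀ u, 0 ≤ μW u) ∧
        0 ≤ ∑ s, lamC s * ((φL' s (p - pbar) + φU' s (p - pbar)) / 2)
            + ∑ u, μC u * ψ' u (p - pbar) ∧
        0 ≤ ∑ s, lamW s * ((φU' s (p - pbar) - φL' s (p - pbar)) / 2)
            + ∑ u, μW u * ψ' u (p - pbar) ∧
        (∀ u, μC u * ψ u pbar = 0 ∧ μW u * ψ u pbar = 0)) :
    ¬ ∃ phat, (phat ∈ E ∧ ∀ u, ψ u phat ≤ 0) ∧
      (∀ s, CWle (φL s phat) (φU s phat) (φL s pbar) (φU s pbar)) ∧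
      (∃ h, CWlt (φL h phat) (φU h phat) (φL h pbar) (φU h pbar)) :=
  kkt_type_II_CW_strict_pseudoconvex_general E l t φL φU ψ pbar φL' φU' ψ' hψspc hφCspc hkkt
end

section
/- (Theorem 3.5(a), Euclidean case.) Let p̄ ∈ F and suppose ψ_u : E → ℝ (u = 1,…,t) are convex at p̄ and directionally differentiable at p̄. Suppose there exists an index c ∈ {1,…,l} such that the interval-valued objective φ_c is LU-convex at p̄ and weakly directionally differentiable at p̄, and there exist scalars λ^L > 0, λ^U > 0 and μ_u ≥ 0 (u = 1,…,t) such that: (i) for all p ∈ E, λ^L (φ_c^L)'(p̄; p − p̄) + λ^U (φ_c^U)'(p̄; p − p̄) + Σ_{u=1}^t μ_u ψ_u'(p̄; p − p̄) ≥ 0; and (ii) μ_u ψ_u(p̄) = 0 for all u. Then p̄ is a weakly type-I Pareto optimal solution of (MIVOP2). -/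
/-!
Suppose a feasible `p̂` improved every objective in the `<_LU` order, in particular `φ_c`. Convexity
at `p̄` bounds each directional derivative in direction `p̂ - p̄` by the corresponding difference
of values. By complementary slackness and feasibility of `p̂` the constraint terms of the KKT
inequality are then nonpositive, while the strict LU-improvement of `φ_c` makes the objective
terms negative, contradicting the KKT inequality at `p̂`.
-/

/- Convexity at `p` bounds every difference quotient along the segment towards `q` by
`f q - f p`, and the bound passes to the limit. -/
theorem HasDirDeriv.le_sub_of_convexAtPt {V : Type*} [NormedAddCommGroup V] [NormedSpace ℝ V]
    {E : Set V} {f : V → ℝ} {p q : V} {d : ℝ} (hd : HasDirDeriv f p (q - p) d) (hq : q ∈ E)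
    (hf : ConvexAtPt E f p) : d ≤ f q - f p := by
  refine le_of_tendsto hd ?_
  filter_upwards [Ioo_mem_nhdsGT (zero_lt_one' ℝ)] with α ⟨hα₀, hα₁⟩
  have hseg : p + α • (q - p) = (1 - α) • p + α • q := by
    rw [smul_sub, sub_smul, one_smul]; abel
  rw [hseg, div_le_iff₀ hα₀]
  linarith [hf q hq α hα₀.le hα₁.le]

theorem LUlt.weighted_sub_neg {aL aU bL bU lamL lamU : ℝ} (h : LUlt aL aU bL bU)
    (hlamL : 0 < lamL) (hlamU : 0 < lamU) : lamL * (aL - bL) + lamU * (aU - bU) < 0 := by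
  obtain ⟨⟨hL, hU⟩, hL' | hU'⟩ := h
  · nlinarith [lt_of_le_of_ne hL hL']
  · nlinarith [lt_of_le_of_ne hU hU']

theorem kkt_weak_type_I_LU_convex_general
    {V : Type*} [NormedAddCommGroup V] [NormedSpace ℝ V]
    (E : Set V)
    (l t : ℕ) (φL φU : Fin l → V → ℝ) (ψ : Fin t → V → ℝ)
    (pbar : V)
    (ψ' : Fin t → V → ℝ)
    (hψd : ∀ u w, HasDirDeriv (ψ u) pbar w (ψ' u w))
    (hψc : ∀ u, ConvexAtPt E (ψ u) pbar)
    (c : Fin l)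
    (φcL' φcU' : V → ℝ)
    (hφLd : ∀ w, HasDirDeriv (φL c) pbar w (φcL' w))
    (hφUd : ∀ w, HasDirDeriv (φU c) pbar w (φcU' w))
    (hφLc : ConvexAtPt E (φL c) pbar)
    (hφUc : ConvexAtPt E (φU c) pbar)
    (lamL lamU : ℝ) (μ : Fin t → ℝ)
    (hlamL : 0 < lamL) (hlamU : 0 < lamU) (hμ : ∀ u, 0 ≤ μ u)
    (hkkt : ∀ p ∈ E,
      0 ≤ lamL * φcL' (p - pbar) + lamU * φcU' (p - pbar)
          + ∑ u, μ u * ψ' u (p - pbar))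
    (hcs : ∀ u, μ u * ψ u pbar = 0) :
    ¬ ∃ phat, (phat ∈ E ∧ ∀ u, ψ u phat ≤ 0) ∧
      (∀ s, LUlt (φL s phat) (φU s phat) (φL s pbar) (φU s pbar)) := by
  rintro ⟨phat, ⟨hphatE, hphatF⟩, hlt⟩
  have hL := (hφLd _).le_sub_of_convexAtPt hphatE hφLc
  have hU := (hφUd _).le_sub_of_convexAtPt hphatE hφUc
  have hcons : ∑ u, μ u * ψ' u (phat - pbar) ≤ 0 := Finset.sum_nonpos fun u _ =>
    calc μ u * ψ' u (phat - pbar)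
        ≤ μ u * (ψ u phat - ψ u pbar) :=
          mul_le_mul_of_nonneg_left ((hψd u _).le_sub_of_convexAtPt hphatE (hψc u)) (hμ u)
      _ = μ u * ψ u phat := by rw [mul_sub, hcs u, sub_zero]
      _ ≤ 0 := mul_nonpos_of_nonneg_of_nonpos (hμ u) (hphatF u)
  have hdescent := (hlt c).weighted_sub_neg hlamL hlamU
  linarith [hkkt phat hphatE, mul_le_mul_of_nonneg_left hL hlamL.le,
    mul_le_mul_of_nonneg_left hU hlamU.le]

/-- Theorem 3.5(a), Euclidean case: KKT sufficiency, via a single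
LU-convex objective `φ_c`, for weakly type-I Pareto optimal solutions. -/
theorem kkt_weak_type_I_LU_convex
    {V : Type*} [NormedAddCommGroup V] [NormedSpace ℝ V]
    (E : Set V) (hEne : E.Nonempty) (hEopen : IsOpen E) (hEconv : Convex ℝ E)
    (l t : ℕ) (φL φU : Fin l → V → ℝ) (ψ : Fin t → V → ℝ)
    (hφint : ∀ s, ∀ x ∈ E, φL s x ≤ φU s x)
    (pbar : V) (hpbarE : pbar ∈ E) (hpbarF : ∀ u, ψ u pbar ≤ 0)
    (ψ' : Fin t → V → ℝ)
    (hψd : ∀ u w, HasDirDeriv (ψ u) pbar w (ψ' u w))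
    (hψc : ∀ u, ConvexAtPt E (ψ u) pbar)
    (c : Fin l)
    (φcL' φcU' : V → ℝ)
    (hφLd : ∀ w, HasDirDeriv (φL c) pbar w (φcL' w))
    (hφUd : ∀ w, HasDirDeriv (φU c) pbar w (φcU' w))
    (hφLc : ConvexAtPt E (φL c) pbar)
    (hφUc : ConvexAtPt E (φU c) pbar)
    (lamL lamU : ℝ) (μ : Fin t → ℝ)
    (hlamL : 0 < lamL) (hlamU : 0 < lamU) (hμ : ∀ u, 0 ≤ μ u)
    (hkkt : ∀ p ∈ E,
      0 ≤ lamL * φcL' (p - pbar) + lamU * φcU' (p - pbar)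
          + ∑ u, μ u * ψ' u (p - pbar))
    (hcs : ∀ u, μ u * ψ u pbar = 0) :
    ¬ ∃ phat, (phat ∈ E ∧ ∀ u, ψ u phat ≤ 0) ∧
      (∀ s, LUlt (φL s phat) (φU s phat) (φL s pbar) (φU s pbar)) :=
  kkt_weak_type_I_LU_convex_general E l t φL φU ψ pbar ψ' hψd hψc c φcL' φcU' hφLd hφUd hφLc hφUc
    lamL lamU μ hlamL hlamU hμ hkkt hcs
end

section
/- (Theorem 3.6(a), Euclidean case.) Let p̄ ∈ F, let each ψ_u (u = 1,…,t) be directionally differentiable at p̄, and assume ψ_u is strictly pseudo-convex at p̄ for every active index u ∈ J(p̄). Suppose there exists an index c ∈ {1,…,l} such that the interval-valued objective φ_c, defined on the nonempty open convex set E, is weakly directionally differentiable at p̄ and LU-pseudo-convex at p̄, and that for every feasible point p ∈ F there exist scalars μ_u^L ≥ 0, μ_u^U ≥ 0 (u = 1,…,t), possibly depending on p, such that: (i) (φ_c^L)'(p̄; p − p̄) + Σ_{u=1}^t μ_u^L ψ_u'(p̄; p − p̄) ≥ 0; (ii) (φ_c^U)'(p̄; p − p̄) + Σ_{u=1}^t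 μ_u^U ψ_u'(p̄; p − p̄) ≥ 0; and (iii) μ_u^L ψ_u(p̄) = 0 = μ_u^U ψ_u(p̄) for all u. Then p̄ is a weakly type-I Pareto optimal solution of (MIVOP2). -/
theorem LUlt.lt_or_lt {aL aU bL bU : ℝ} (h : LUlt aL aU bL bU) : aL < bL ∨ aU < bU := by
  obtain ⟨⟨hL, hU⟩, hneL | hneU⟩ := h
  · exact Or.inl (hL.lt_of_ne hneL)
  · exact Or.inr (hU.lt_of_ne hneU)

section

variable {V ι : Type*} [NormedAddCommGroup V] [NormedSpace ℝ V] {E : Set V} {pbar p : V}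

theorem sum_mul_dirDeriv_nonpos_of_strictPseudoConvexAt [Fintype ι] {ψ ψ' : ι → V → ℝ}
    {μ : ι → ℝ} (hψ : ∀ u, ψ u pbar = 0 → StrictPseudoConvexAt E (ψ u) (ψ' u) pbar)
    (hμ : ∀ u, 0 ≤ μ u) (hslack : ∀ u, μ u * ψ u pbar = 0)
    (hpE : p ∈ E) (hpF : ∀ u, ψ u p ≤ 0) (hp : p ≠ pbar) :
    ∑ u, μ u * ψ' u (p - pbar) ≤ 0 := by
  refine Finset.sum_nonpos fun u _ => ?_
  rcases mul_eq_zero.1 (hslack u) with hμu | hactive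
  · simp [hμu]
  · exact mul_nonpos_of_nonneg_of_nonpos (hμ u)
      (hψ u hactive p hpE hp (hactive ▸ hpF u)).le

theorem PseudoConvexAt.le_of_nonneg_add {f f' : V → ℝ} (hf : PseudoConvexAt E f f' pbar)
    (hpE : p ∈ E) {S : ℝ} (hS : S ≤ 0) (hkkt : 0 ≤ f' (p - pbar) + S) : f pbar ≤ f p :=
  not_lt.1 fun hlt => by linarith [hf p hpE hlt]

end

theorem kkt_weak_type_I_LU_pseudoconvex_general
    {V : Type*} [NormedAddCommGroup V] [NormedSpace ℝ V]
    (E : Set V)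
    (l t : ℕ) (φL φU : Fin l → V → ℝ) (ψ : Fin t → V → ℝ)
    (pbar : V)
    (ψ' : Fin t → V → ℝ)
    -- strict pseudo-convexity of the active constraints at `pbar`
    (hψspc : ∀ u, ψ u pbar = 0 → StrictPseudoConvexAt E (ψ u) (ψ' u) pbar)
    (c : Fin l)
    (φcL' φcU' : V → ℝ)
    -- LU-pseudo-convexity of `φ_c` at `pbar`
    (hφLpc : PseudoConvexAt E (φL c) φcL' pbar)
    (hφUpc : PseudoConvexAt E (φU c) φcU' pbar)
    -- multipliers, possibly depending on the feasible point `p`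
    (hkkt : ∀ p, p ∈ E → (∀ u, ψ u p ≤ 0) →
      ∃ μL μU : Fin t → ℝ,
        (∀ u, 0 ≤ μL u) ∧ (∀ u, 0 ≤ μU u) ∧
        0 ≤ φcL' (p - pbar) + ∑ u, μL u * ψ' u (p - pbar) ∧
        0 ≤ φcU' (p - pbar) + ∑ u, μU u * ψ' u (p - pbar) ∧
        (∀ u, μL u * ψ u pbar = 0 ∧ μU u * ψ u pbar = 0)) :
    ¬ ∃ phat, (phat ∈ E ∧ ∀ u, ψ u phat ≤ 0) ∧
      (∀ s, LUlt (φL s phat) (φU s phat) (φL s pbar) (φU s pbar)) := by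
  rintro ⟨phat, ⟨hphatE, hphatF⟩, hlt⟩
  obtain ⟨μL, μU, hμL, hμU, hkktL, hkktU, hslack⟩ := hkkt phat hphatE hphatF
  rcases (hlt c).lt_or_lt with hL | hU
  · have hsum := sum_mul_dirDeriv_nonpos_of_strictPseudoConvexAt hψspc hμL
      (fun u => (hslack u).1) hphatE hphatF (ne_of_apply_ne (φL c) hL.ne)
    exact hL.not_ge (hφLpc.le_of_nonneg_add hphatE hsum hkktL)
  · have hsum := sum_mul_dirDeriv_nonpos_of_strictPseudoConvexAt hψspc hμU
      (fun u => (hslack u).2) hphatE hphatF (ne_of_apply_ne (φU c) hU.ne)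
    exact hU.not_ge (hφUpc.le_of_nonneg_add hphatE hsum hkktU)

/-- Theorem 3.6(a), Euclidean case: KKT sufficiency, via a single
LU-pseudo-convex objective `φ_c`, for weakly type-I Pareto optimal solutions. -/
theorem kkt_weak_type_I_LU_pseudoconvex
    {V : Type*} [NormedAddCommGroup V] [NormedSpace ℝ V]
    (E : Set V) (hEne : E.Nonempty) (hEopen : IsOpen E) (hEconv : Convex ℝ E)
    (l t : ℕ) (φL φU : Fin l → V → ℝ) (ψ : Fin t → V → ℝ)
    (hφint : ∀ s, ∀ x ∈ E, φL s x ≤ φU s x)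
    (pbar : V) (hpbarE : pbar ∈ E) (hpbarF : ∀ u, ψ u pbar ≤ 0)
    (ψ' : Fin t → V → ℝ)
    (hψd : ∀ u w, HasDirDeriv (ψ u) pbar w (ψ' u w))
    -- strict pseudo-convexity of the active constraints at `pbar`
    (hψspc : ∀ u, ψ u pbar = 0 → StrictPseudoConvexAt E (ψ u) (ψ' u) pbar)
    (c : Fin l)
    (φcL' φcU' : V → ℝ)
    (hφLd : ∀ w, HasDirDeriv (φL c) pbar w (φcL' w))
    (hφUd : ∀ w, HasDirDeriv (φU c) pbar w (φcU' w))
    -- LU-pseudo-convexity of `φ_c` at `pbar`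
    (hφLpc : PseudoConvexAt E (φL c) φcL' pbar)
    (hφUpc : PseudoConvexAt E (φU c) φcU' pbar)
    -- multipliers, possibly depending on the feasible point `p`
    (hkkt : ∀ p, p ∈ E → (∀ u, ψ u p ≤ 0) →
      ∃ μL μU : Fin t → ℝ,
        (∀ u, 0 ≤ μL u) ∧ (∀ u, 0 ≤ μU u) ∧
        0 ≤ φcL' (p - pbar) + ∑ u, μL u * ψ' u (p - pbar) ∧
        0 ≤ φcU' (p - pbar) + ∑ u, μU u * ψ' u (p - pbar) ∧
        (∀ u, μL u * ψ u pbar = 0 ∧ μU u * ψ u pbar = 0)) :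
    ¬ ∃ phat, (phat ∈ E ∧ ∀ u, ψ u phat ≤ 0) ∧
      (∀ s, LUlt (φL s phat) (φU s phat) (φL s pbar) (φU s pbar)) :=
  kkt_weak_type_I_LU_pseudoconvex_general E l t φL φU ψ pbar ψ' hψspc c φcL' φcU' hφLpc hφUpc hkkt
end

section
/- (Theorem 3.7(a), Euclidean case.) Let p̄ ∈ F, let each ψ_u (u = 1,…,t) be directionally differentiable at p̄, and assume ψ_u is strictly pseudo-convex at p̄ for every active index u ∈ J(p̄). Suppose there exists an index c ∈ {1,…,l} such that the interval-valued objective φ_c, defined on the nonempty open convex set E, is weakly directionally differentiable at p̄, and either: (L-case) φ_c is strictly L-pseudo-convex at p̄ and for every p ∈ F there exist scalars μ_u ≥ 0 (possibly depending on p) with (φ_c^L)'(p̄; p − p̄) + Σ_{u=1}^t μ_u ψ_u'(p̄; p − p̄) ≥ 0 and μ_u ψ_u(p̄) = 0 for all u; or (U-case) φ_c is strictly U-pseudo-convex at p̄ and for every p ∈ F there exist scalars μ_u ≥ 0 with (φ_c^U)'(p̄; p − p̄) + Σ_{u=1}^t μ_u ψ_u'(p̄; p − p̄) ≥ 0 and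 μ_u ψ_u(p̄) = 0 for all u. Then p̄ is a strongly type-I Pareto optimal solution of (MIVOP2). -/
section KKT

variable {V : Type*} [NormedAddCommGroup V] [NormedSpace ℝ V] {E : Set V} {pbar p : V}

lemma multiplier_mul_dirDeriv_nonpos {ψ ψ' : V → ℝ} {μ : ℝ}
    (hψspc : ψ pbar = 0 → StrictPseudoConvexAt E ψ ψ' pbar)
    (hμ : 0 ≤ μ) (hslack : μ * ψ pbar = 0)
    (hp : p ∈ E) (hne : p ≠ pbar) (hψp : ψ p ≤ 0) :
    μ * ψ' (p - pbar) ≤ 0 := by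
  rcases hμ.eq_or_lt with rfl | hμpos
  · simp
  have hactive : ψ pbar = 0 := (mul_eq_zero.mp hslack).resolve_left hμpos.ne'
  have hderiv : ψ' (p - pbar) < 0 := hψspc hactive p hp hne (hactive ▸ hψp)
  exact (mul_neg_of_pos_of_neg hμpos hderiv).le

lemma lt_of_strictPseudoConvexAt_of_kkt {t : ℕ} {ψ ψ' : Fin t → V → ℝ} {f f' : V → ℝ}
    (hψspc : ∀ u, ψ u pbar = 0 → StrictPseudoConvexAt E (ψ u) (ψ' u) pbar)
    (hspc : StrictPseudoConvexAt E f f' pbar)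
    {μ : Fin t → ℝ} (hμ : ∀ u, 0 ≤ μ u)
    (hstat : 0 ≤ f' (p - pbar) + ∑ u, μ u * ψ' u (p - pbar))
    (hslack : ∀ u, μ u * ψ u pbar = 0)
    (hp : p ∈ E) (hpF : ∀ u, ψ u p ≤ 0) (hne : p ≠ pbar) :
    f pbar < f p := by
  by_contra! hle
  have hf' : f' (p - pbar) < 0 := hspc p hp hne hle
  have hsum : ∑ u, μ u * ψ' u (p - pbar) ≤ 0 := Finset.sum_nonpos fun u _ =>
    multiplier_mul_dirDeriv_nonpos (hψspc u) (hμ u) (hslack u) hp hne (hpF u)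
  linarith

end KKT

theorem kkt_strong_type_I_L_or_U_strict_pseudoconvex_general
    {V : Type*} [NormedAddCommGroup V] [NormedSpace ℝ V]
    (E : Set V)
    (l t : ℕ) (φL φU : Fin l → V → ℝ) (ψ : Fin t → V → ℝ)
    (pbar : V)
    (ψ' : Fin t → V → ℝ)
    -- strict pseudo-convexity of the active constraints at `pbar`
    (hψspc : ∀ u, ψ u pbar = 0 → StrictPseudoConvexAt E (ψ u) (ψ' u) pbar)
    (c : Fin l)
    (φcL' φcU' : V → ℝ)
    -- L-case or U-case
    (hcase :
      (StrictPseudoConvexAt E (φL c) φcL' pbar ∧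
        ∀ p, p ∈ E → (∀ u, ψ u p ≤ 0) →
          ∃ μ : Fin t → ℝ, (∀ u, 0 ≤ μ u) ∧
            0 ≤ φcL' (p - pbar) + ∑ u, μ u * ψ' u (p - pbar) ∧
            ∀ u, μ u * ψ u pbar = 0) ∨
      (StrictPseudoConvexAt E (φU c) φcU' pbar ∧
        ∀ p, p ∈ E → (∀ u, ψ u p ≤ 0) →
          ∃ μ : Fin t → ℝ, (∀ u, 0 ≤ μ u) ∧
            0 ≤ φcU' (p - pbar) + ∑ u, μ u * ψ' u (p - pbar) ∧
            ∀ u, μ u * ψ u pbar = 0)) :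
    ¬ ∃ phat, (phat ∈ E ∧ ∀ u, ψ u phat ≤ 0) ∧ phat ≠ pbar ∧
      (∀ s, LUle (φL s phat) (φU s phat) (φL s pbar) (φU s pbar)) := by
  rintro ⟨phat, ⟨hE, hF⟩, hne, hle⟩
  rcases hcase with ⟨hspc, hkkt⟩ | ⟨hspc, hkkt⟩
  · obtain ⟨μ, hμ, hstat, hslack⟩ := hkkt phat hE hF
    exact (lt_of_strictPseudoConvexAt_of_kkt hψspc hspc hμ hstat hslack hE hF hne).not_ge
      (hle c).1
  · obtain ⟨μ, hμ, hstat, hslack⟩ := hkkt phat hE hF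
    exact (lt_of_strictPseudoConvexAt_of_kkt hψspc hspc hμ hstat hslack hE hF hne).not_ge
      (hle c).2

/-- Theorem 3.7(a), Euclidean case: KKT sufficiency, via a single
strictly L-pseudo-convex (or strictly U-pseudo-convex) objective `φ_c`, for
strongly type-I Pareto optimal solutions. -/
theorem kkt_strong_type_I_L_or_U_strict_pseudoconvex
    {V : Type*} [NormedAddCommGroup V] [NormedSpace ℝ V]
    (E : Set V) (hEne : E.Nonempty) (hEopen : IsOpen E) (hEconv : Convex ℝ E)
    (l t : ℕ) (φL φU : Fin l → V → ℝ) (ψ : Fin t → V → ℝ)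
    (hφint : ∀ s, ∀ x ∈ E, φL s x ≤ φU s x)
    (pbar : V) (hpbarE : pbar ∈ E) (hpbarF : ∀ u, ψ u pbar ≤ 0)
    (ψ' : Fin t → V → ℝ)
    (hψd : ∀ u w, HasDirDeriv (ψ u) pbar w (ψ' u w))
    -- strict pseudo-convexity of the active constraints at `pbar`
    (hψspc : ∀ u, ψ u pbar = 0 → StrictPseudoConvexAt E (ψ u) (ψ' u) pbar)
    (c : Fin l)
    (φcL' φcU' : V → ℝ)
    (hφLd : ∀ w, HasDirDeriv (φL c) pbar w (φcL' w))
    (hφUd : ∀ w, HasDirDeriv (φU c) pbar w (φcU' w))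
    -- L-case or U-case
    (hcase :
      (StrictPseudoConvexAt E (φL c) φcL' pbar ∧
        ∀ p, p ∈ E → (∀ u, ψ u p ≤ 0) →
          ∃ μ : Fin t → ℝ, (∀ u, 0 ≤ μ u) ∧
            0 ≤ φcL' (p - pbar) + ∑ u, μ u * ψ' u (p - pbar) ∧
            ∀ u, μ u * ψ u pbar = 0) ∨
      (StrictPseudoConvexAt E (φU c) φcU' pbar ∧
        ∀ p, p ∈ E → (∀ u, ψ u p ≤ 0) →
          ∃ μ : Fin t → ℝ, (∀ u, 0 ≤ μ u) ∧
            0 ≤ φcU' (p - pbar) + ∑ u, μ u * ψ' u (p - pbar) ∧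
            ∀ u, μ u * ψ u pbar = 0)) :
    ¬ ∃ phat, (phat ∈ E ∧ ∀ u, ψ u phat ≤ 0) ∧ phat ≠ pbar ∧
      (∀ s, LUle (φL s phat) (φU s phat) (φL s pbar) (φU s pbar)) :=
  kkt_strong_type_I_L_or_U_strict_pseudoconvex_general E l t φL φU ψ pbar ψ' hψspc c φcL' φcU' hcase
end

section
/- (Theorem 3.7(b), Euclidean case.) Let p̄ ∈ F, let each ψ_u (u = 1,…,t) be directionally differentiable at p̄, and assume ψ_u is strictly pseudo-convex at p̄ for every active index u ∈ J(p̄). Suppose there exists an index c ∈ {1,…,l} such that the interval-valued objective φ_c, defined on the nonempty open convex set E, is weakly directionally differentiable at p̄, and either: (C-case) φ_c is strictly C-pseudo-convex at p̄ and for every p ∈ F there exist scalars μ_u ≥ 0 (possibly depending on p) with (φ_c^C)'(p̄; p − p̄) + Σ_{u=1}^t μ_u ψ_u'(p̄; p − p̄) ≥ 0 and μ_u ψ_u(p̄) = 0 for all u; or (W-case) φ_c is strictly W-pseudo-convex at p̄ and for every p ∈ F there exist scalars μ_u ≥ 0 with (φ_c^W)'(p̄; p − p̄) + Σ_{u=1}^t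 μ_u ψ_u'(p̄; p − p̄) ≥ 0 and μ_u ψ_u(p̄) = 0 for all u. Then p̄ is a strongly type-II Pareto optimal solution of (MIVOP2). -/
/-!
A feasible `p ≠ p̄` with `φ_c(p) ≤_CW φ_c(p̄)` has center (resp. half-width) of `φ_c` at most
its value at `p̄`, so strict pseudo-convexity makes the directional derivative of that real
function in direction `p - p̄` negative. By complementary slackness only active constraints carry
a positive multiplier, and their derivatives in that direction are negative as well, so the
KKT sum is negative, a contradiction.
-/

section KKT

variable {V : Type*} [NormedAddCommGroup V] [NormedSpace ℝ V] {E : Set V}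
  {ι : Type*} [Fintype ι] {ψ ψ' : ι → V → ℝ} {pbar p : V}

theorem sum_mul_dirDeriv_nonpos_of_complementarySlackness
    (hψspc : ∀ u, ψ u pbar = 0 → StrictPseudoConvexAt E (ψ u) (ψ' u) pbar)
    {μ : ι → ℝ} (hμ : ∀ u, 0 ≤ μ u) (hslack : ∀ u, μ u * ψ u pbar = 0)
    (hpE : p ∈ E) (hpF : ∀ u, ψ u p ≤ 0) (hne : p ≠ pbar) :
    ∑ u, μ u * ψ' u (p - pbar) ≤ 0 := by
  refine Finset.sum_nonpos fun u _ => ?_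
  by_cases hact : ψ u pbar = 0
  · have hdir := hψspc u hact p hpE hne (hact ▸ hpF u)
    exact mul_nonpos_of_nonneg_of_nonpos (hμ u) hdir.le
  · simp [(mul_eq_zero.mp (hslack u)).resolve_right hact]

theorem StrictPseudoConvexAt.lt_of_kkt {f f' : V → ℝ}
    (hf : StrictPseudoConvexAt E f f' pbar)
    (hψspc : ∀ u, ψ u pbar = 0 → StrictPseudoConvexAt E (ψ u) (ψ' u) pbar)
    (hkkt : ∃ μ : ι → ℝ, (∀ u, 0 ≤ μ u) ∧
      0 ≤ f' (p - pbar) + ∑ u, μ u * ψ' u (p - pbar) ∧ ∀ u, μ u * ψ u pbar = 0)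
    (hpE : p ∈ E) (hpF : ∀ u, ψ u p ≤ 0) (hne : p ≠ pbar) :
    f pbar < f p := by
  obtain ⟨μ, hμ, hstat, hslack⟩ := hkkt
  by_contra! hle
  have hf' := hf p hpE hne hle
  have hsum := sum_mul_dirDeriv_nonpos_of_complementarySlackness hψspc hμ hslack hpE hpF hne
  linarith

end KKT

theorem kkt_strong_type_II_C_or_W_strict_pseudoconvex_general
    {V : Type*} [NormedAddCommGroup V] [NormedSpace ℝ V]
    (E : Set V)
    (l t : ℕ) (φL φU : Fin l → V → ℝ) (ψ : Fin t → V → ℝ)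
    (pbar : V)
    (ψ' : Fin t → V → ℝ)
    -- strict pseudo-convexity of the active constraints at `pbar`
    (hψspc : ∀ u, ψ u pbar = 0 → StrictPseudoConvexAt E (ψ u) (ψ' u) pbar)
    (c : Fin l)
    (φcL' φcU' : V → ℝ)
    -- C-case or W-case
    (hcase :
      (StrictPseudoConvexAt E (fun x => (φL c x + φU c x) / 2)
          (fun w => (φcL' w + φcU' w) / 2) pbar ∧
        ∀ p, p ∈ E → (∀ u, ψ u p ≤ 0) →
          ∃ μ : Fin t → ℝ, (∀ u, 0 ≤ μ u) ∧
            0 ≤ (φcL' (p - pbar) + φcU' (p - pbar)) / 2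
                + ∑ u, μ u * ψ' u (p - pbar) ∧
            ∀ u, μ u * ψ u pbar = 0) ∨
      (StrictPseudoConvexAt E (fun x => (φU c x - φL c x) / 2)
          (fun w => (φcU' w - φcL' w) / 2) pbar ∧
        ∀ p, p ∈ E → (∀ u, ψ u p ≤ 0) →
          ∃ μ : Fin t → ℝ, (∀ u, 0 ≤ μ u) ∧
            0 ≤ (φcU' (p - pbar) - φcL' (p - pbar)) / 2
                + ∑ u, μ u * ψ' u (p - pbar) ∧
            ∀ u, μ u * ψ u pbar = 0)) :
    ¬ ∃ phat, (phat ∈ E ∧ ∀ u, ψ u phat ≤ 0) ∧ phat ≠ pbar ∧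
      (∀ s, CWle (φL s phat) (φU s phat) (φL s pbar) (φU s pbar)) := by
  rintro ⟨phat, ⟨hphatE, hphatF⟩, hne, hCW⟩
  rcases hcase with ⟨hspc, hkkt⟩ | ⟨hspc, hkkt⟩
  · exact (hspc.lt_of_kkt hψspc (hkkt phat hphatE hphatF) hphatE hphatF hne).not_ge (hCW c).1
  · exact (hspc.lt_of_kkt hψspc (hkkt phat hphatE hphatF) hphatE hphatF hne).not_ge (hCW c).2

/-- Theorem 3.7(b), Euclidean case: KKT sufficiency, via a single
strictly C-pseudo-convex (or strictly W-pseudo-convex) objective `φ_c`, for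
strongly type-II Pareto optimal solutions. -/
theorem kkt_strong_type_II_C_or_W_strict_pseudoconvex
    {V : Type*} [NormedAddCommGroup V] [NormedSpace ℝ V]
    (E : Set V) (hEne : E.Nonempty) (hEopen : IsOpen E) (hEconv : Convex ℝ E)
    (l t : ℕ) (φL φU : Fin l → V → ℝ) (ψ : Fin t → V → ℝ)
    (hφint : ∀ s, ∀ x ∈ E, φL s x ≤ φU s x)
    (pbar : V) (hpbarE : pbar ∈ E) (hpbarF : ∀ u, ψ u pbar ≤ 0)
    (ψ' : Fin t → V → ℝ)
    (hψd : ∀ u w, HasDirDeriv (ψ u) pbar w (ψ' u w))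
    -- strict pseudo-convexity of the active constraints at `pbar`
    (hψspc : ∀ u, ψ u pbar = 0 → StrictPseudoConvexAt E (ψ u) (ψ' u) pbar)
    (c : Fin l)
    (φcL' φcU' : V → ℝ)
    (hφLd : ∀ w, HasDirDeriv (φL c) pbar w (φcL' w))
    (hφUd : ∀ w, HasDirDeriv (φU c) pbar w (φcU' w))
    -- C-case or W-case
    (hcase :
      (StrictPseudoConvexAt E (fun x => (φL c x + φU c x) / 2)
          (fun w => (φcL' w + φcU' w) / 2) pbar ∧
        ∀ p, p ∈ E → (∀ u, ψ u p ≤ 0) →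
          ∃ μ : Fin t → ℝ, (∀ u, 0 ≤ μ u) ∧
            0 ≤ (φcL' (p - pbar) + φcU' (p - pbar)) / 2
                + ∑ u, μ u * ψ' u (p - pbar) ∧
            ∀ u, μ u * ψ u pbar = 0) ∨
      (StrictPseudoConvexAt E (fun x => (φU c x - φL c x) / 2)
          (fun w => (φcU' w - φcL' w) / 2) pbar ∧
        ∀ p, p ∈ E → (∀ u, ψ u p ≤ 0) →
          ∃ μ : Fin t → ℝ, (∀ u, 0 ≤ μ u) ∧
            0 ≤ (φcU' (p - pbar) - φcL' (p - pbar)) / 2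
                + ∑ u, μ u * ψ' u (p - pbar) ∧
            ∀ u, μ u * ψ u pbar = 0)) :
    ¬ ∃ phat, (phat ∈ E ∧ ∀ u, ψ u phat ≤ 0) ∧ phat ≠ pbar ∧
      (∀ s, CWle (φL s phat) (φU s phat) (φL s pbar) (φU s pbar)) :=
  kkt_strong_type_II_C_or_W_strict_pseudoconvex_general E l t φL φU ψ pbar ψ' hψspc c φcL' φcU'
    hcase
end

section
/- (Theorem 4.1, Euclidean case.) Let p̄ ∈ F and suppose ψ_u : E → ℝ (u = 1,…,t) are convex at p̄ and directionally differentiable at p̄, and the interval-valued objectives φ_s (s = 1,…,l) are LU-convex at p̄ and weakly directionally differentiable at p̄. Suppose there exist scalars λ_s > 0 (s = 1,…,l) and μ_u ≥ 0 (u = 1,…,t) such that: (i) for every p ∈ E, −(Σ_{s=1}^l λ_s φ_s'(p̄; p − p̄)) ⊖_g (Σ_{u=1}^t μ_u ψ_u'(p̄; p − p̄)) ≤_LU [0, 0], where φ_s'(p̄; w) denotes the gH-directional derivative interval [min{(φ_s^L)'(p̄; w), (φ_s^U)'(p̄; w)}, max{(φ_s^L)'(p̄; w), (φ_s^U)'(p̄;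 w)}], the sum Σ λ_s φ_s' is the interval [Σ λ_s min{(φ_s^L)', (φ_s^U)'}, Σ λ_s max{(φ_s^L)', (φ_s^U)'}], the real number Σ μ_u ψ_u' is treated as a degenerate interval, and condition (i) is equivalent to the two inequalities Σ_{s=1}^l λ_s min{(φ_s^L)'(p̄; p − p̄), (φ_s^U)'(p̄; p − p̄)} + Σ_{u=1}^t μ_u ψ_u'(p̄; p − p̄) ≥ 0 and Σ_{s=1}^l λ_s max{(φ_s^L)'(p̄; p − p̄), (φ_s^U)'(p̄; p − p̄)} + Σ_{u=1}^t μ_u ψ_u'(p̄; p − p̄) ≥ 0; and (ii) μ_u ψ_u(p̄) = 0 for all u. Then p̄ is a type-I Pareto optimal solution of (MIVOP2). -/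
/-!
Convexity of `f` at `p̄` turns the directional derivative into a lower estimate:
`f'(p̄; q - p̄) ≤ f q - f p̄`. At a point `p̂` dominating `p̄`, every term
`min (φ_s^L)'(p̄; p̂ - p̄) (φ_s^U)'(p̄; p̂ - p̄)` is then `≤ 0`, and it is `< 0` for the index
of strict domination, so the `λ`-weighted sum is negative; feasibility of `p̂` and
complementary slackness make every `μ_u ψ_u'(p̄; p̂ - p̄)` nonpositive. Together they
contradict the first of the two KKT inequalities at `p = p̂`.
-/

theorem ConvexAtPt.hasDirDeriv_le_sub {V : Type*} [NormedAddCommGroup V] [NormedSpace ℝ V]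
    {E : Set V} {f : V → ℝ} {pbar q : V} {d : ℝ}
    (hconv : ConvexAtPt E f pbar) (hq : q ∈ E)
    (hd : HasDirDeriv f pbar (q - pbar) d) :
    d ≤ f q - f pbar := by
  refine le_of_tendsto hd ?_
  filter_upwards [Ioc_mem_nhdsGT_of_mem (Set.left_mem_Ico.2 one_pos)] with α ⟨hα₀, hα₁⟩
  have hseg : pbar + α • (q - pbar) = (1 - α) • pbar + α • q := by module
  have hle := hconv q hq α hα₀.le hα₁
  rw [hseg, div_le_iff₀ hα₀]
  linarith

theorem LUle.min_nonpos {aL aU bL bU dL dU : ℝ} (hab : LUle aL aU bL bU)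
    (hdL : dL ≤ aL - bL) : min dL dU ≤ 0 :=
  (min_le_left _ _).trans (by linarith [hab.1])

theorem LUlt.min_neg {aL aU bL bU dL dU : ℝ} (hab : LUlt aL aU bL bU)
    (hdL : dL ≤ aL - bL) (hdU : dU ≤ aU - bU) : min dL dU < 0 := by
  obtain ⟨⟨hL, hU⟩, hL_ne | hU_ne⟩ := hab
  · exact (min_le_left _ _).trans_lt (by linarith [hL.lt_of_ne hL_ne])
  · exact (min_le_right _ _).trans_lt (by linarith [hU.lt_of_ne hU_ne])

theorem mul_nonpos_of_complementary_slackness_s19 {μ d y x : ℝ} (hμ : 0 ≤ μ)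
    (hd : d ≤ y - x) (hy : y ≤ 0) (hslack : μ * x = 0) : μ * d ≤ 0 := by
  nlinarith

theorem kkt_type_I_gH_difference_general
    {V : Type*} [NormedAddCommGroup V] [NormedSpace ℝ V]
    (E : Set V)
    (l t : ℕ) (φL φU : Fin l → V → ℝ) (ψ : Fin t → V → ℝ)
    (pbar : V)
    (φL' φU' : Fin l → V → ℝ)
    (hφLd : ∀ s w, HasDirDeriv (φL s) pbar w (φL' s w))
    (hφUd : ∀ s w, HasDirDeriv (φU s) pbar w (φU' s w))
    (ψ' : Fin t → V → ℝ)
    (hψd : ∀ u w, HasDirDeriv (ψ u) pbar w (ψ' u w))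
    (hφLc : ∀ s, ConvexAtPt E (φL s) pbar)
    (hφUc : ∀ s, ConvexAtPt E (φU s) pbar)
    (hψc : ∀ u, ConvexAtPt E (ψ u) pbar)
    (lam : Fin l → ℝ) (μ : Fin t → ℝ)
    (hlam : ∀ s, 0 < lam s) (hμ : ∀ u, 0 ≤ μ u)
    (hkkt : ∀ p ∈ E,
      0 ≤ ∑ s, lam s * min (φL' s (p - pbar)) (φU' s (p - pbar))
          + ∑ u, μ u * ψ' u (p - pbar) ∧
      0 ≤ ∑ s, lam s * max (φL' s (p - pbar)) (φU' s (p - pbar))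
          + ∑ u, μ u * ψ' u (p - pbar))
    (hcs : ∀ u, μ u * ψ u pbar = 0) :
    ¬ ∃ phat, (phat ∈ E ∧ ∀ u, ψ u phat ≤ 0) ∧
      (∀ s, LUle (φL s phat) (φU s phat) (φL s pbar) (φU s pbar)) ∧
      (∃ h, LUlt (φL h phat) (φU h phat) (φL h pbar) (φU h pbar)) := by
  rintro ⟨phat, ⟨hphatE, hphatF⟩, hle, h, hlt⟩
  have hL s := (hφLc s).hasDirDeriv_le_sub hphatE (hφLd s _)
  have hU s := (hφUc s).hasDirDeriv_le_sub hphatE (hφUd s _)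
  have hψ u := (hψc u).hasDirDeriv_le_sub hphatE (hψd u _)
  have hobj : ∑ s, lam s * min (φL' s (phat - pbar)) (φU' s (phat - pbar)) < 0 :=
    Finset.sum_neg'
      (fun s _ => mul_nonpos_of_nonneg_of_nonpos (hlam s).le ((hle s).min_nonpos (hL s)))
      ⟨h, Finset.mem_univ h, mul_neg_of_pos_of_neg (hlam h) (hlt.min_neg (hL h) (hU h))⟩
  have hcon : ∑ u, μ u * ψ' u (phat - pbar) ≤ 0 :=
    Finset.sum_nonpos fun u _ =>
      mul_nonpos_of_complementary_slackness_s19 (hμ u) (hψ u) (hphatF u) (hcs u)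
  linarith [(hkkt phat hphatE).1]

/-- Theorem 4.1, Euclidean case: KKT sufficiency for type-I
Pareto optimal solutions via the gH-difference condition
`-(Σ λ_s φ_s'(p̄; p-p̄)) ⊖_g (Σ μ_u ψ_u'(p̄; p-p̄)) ≤_LU [0,0]`, stated through its
equivalent pair of min/max inequalities. -/
theorem kkt_type_I_gH_difference
    {V : Type*} [NormedAddCommGroup V] [NormedSpace ℝ V]
    (E : Set V) (hEne : E.Nonempty) (hEopen : IsOpen E) (hEconv : Convex ℝ E)
    (l t : ℕ) (φL φU : Fin l → V → ℝ) (ψ : Fin t → V → ℝ)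
    (hφint : ∀ s, ∀ x ∈ E, φL s x ≤ φU s x)
    (pbar : V) (hpbarE : pbar ∈ E) (hpbarF : ∀ u, ψ u pbar ≤ 0)
    (φL' φU' : Fin l → V → ℝ)
    (hφLd : ∀ s w, HasDirDeriv (φL s) pbar w (φL' s w))
    (hφUd : ∀ s w, HasDirDeriv (φU s) pbar w (φU' s w))
    (ψ' : Fin t → V → ℝ)
    (hψd : ∀ u w, HasDirDeriv (ψ u) pbar w (ψ' u w))
    (hφLc : ∀ s, ConvexAtPt E (φL s) pbar)
    (hφUc : ∀ s, ConvexAtPt E (φU s) pbar)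
    (hψc : ∀ u, ConvexAtPt E (ψ u) pbar)
    (lam : Fin l → ℝ) (μ : Fin t → ℝ)
    (hlam : ∀ s, 0 < lam s) (hμ : ∀ u, 0 ≤ μ u)
    (hkkt : ∀ p ∈ E,
      0 ≤ ∑ s, lam s * min (φL' s (p - pbar)) (φU' s (p - pbar))
          + ∑ u, μ u * ψ' u (p - pbar) ∧
      0 ≤ ∑ s, lam s * max (φL' s (p - pbar)) (φU' s (p - pbar))
          + ∑ u, μ u * ψ' u (p - pbar))
    (hcs : ∀ u, μ u * ψ u pbar = 0) :
    ¬ ∃ phat, (phat ∈ E ∧ ∀ u, ψ u phat ≤ 0) ∧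
      (∀ s, LUle (φL s phat) (φU s phat) (φL s pbar) (φU s pbar)) ∧
      (∃ h, LUlt (φL h phat) (φU h phat) (φL h pbar) (φU h pbar)) :=
  kkt_type_I_gH_difference_general E l t φL φU ψ pbar φL' φU' hφLd hφUd ψ' hψd hφLc hφUc hψc lam μ
    hlam hμ hkkt hcs
end
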